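/- Let p ≥ 1, let v satisfy hypothesis (H) with constants L, K, and let μ₀, ν₀ ∈ M. Let μ^k and ν^k be constructed by Scheme 1 with time step Δt = T/2^k starting from μ₀ and ν₀ respectively. Then d(μ^k, ν^k) ≤ ( e^{((p+1)/p) L Δt} + e^{L Δt / p} (e^{L Δt} − 1) K / L )^{2^k} · W_p(μ₀, ν₀), where d(μ,ν) = sup_{t∈[0,T]} W_p(μ_t, ν_t). -/

import Mathlib

open MeasureTheory Set
open scoped RealInnerProductSpace

noncomputable section

abbrev En (n : ℕ) : Type := EuclideanSpace ℝ (Fin n)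

/-- `𝓜`: probability measures on ℝⁿ with compact support, absolutely continuous
with respect to Lebesgue measure. -/
def MemM (n : ℕ) (μ : Measure (En n)) : Prop :=
  IsProbabilityMeasure μ ∧ μ ≪ (volume : Measure (En n)) ∧
    ∃ K : Set (En n), IsCompact K ∧ μ Kᶜ = 0

/-- A finite positive measure on ℝⁿ, absolutely continuous with respect to Lebesgue
measure and compactly supported. -/
def NiceMeasure (n : ℕ) (μ : Measure (En n)) : Prop :=
  IsFiniteMeasure μ ∧ μ ≪ (volume : Measure (En n)) ∧
    ∃ K : Set (En n), IsCompact K ∧ μ Kᶜ = 0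

/-- Wasserstein distance of exponent `p`, in the Monge (transport-map) formulation:
`W_p(μ,ν) = inf { (∫ ‖γ x - x‖^p dμ)^(1/p) : γ measurable, γ#μ = ν }`. -/
def Wp (n : ℕ) (p : ℝ) (μ ν : Measure (En n)) : ℝ :=
  sInf { c : ℝ | ∃ γ : En n → En n, Measurable γ ∧ Measure.map γ μ = ν ∧
    c = (∫ x, ‖γ x - x‖ ^ p ∂μ) ^ (1 / p) }

/-- `Φ` is the flow of the vector field `v`: `Φ 0 x = x` and `∂ₜ Φ t x = v (Φ t x)`. -/
def IsFlow (n : ℕ) (v : En n → En n) (Φ : ℝ → En n → En n) : Prop :=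
  (∀ x, Φ 0 x = x) ∧ ∀ x t, HasDerivAt (fun s => Φ s x) (v (Φ t x)) t

/-- Hypothesis (H): `v[μ]` is `C¹`, uniformly Lipschitz (constant `L`), uniformly
bounded (constant `M`), and `μ ↦ v[μ]` is Lipschitz from `(𝓜, W_p)` to `C⁰` with
constant `K`. -/
def HypH (n : ℕ) (p : ℝ) (v : Measure (En n) → En n → En n) (L M K : ℝ) : Prop :=
  0 < L ∧ 0 < M ∧ 0 < K ∧
  (∀ μ, MemM n μ → ContDiff ℝ 1 (v μ)) ∧
  (∀ μ, MemM n μ → ∀ x y, ‖v μ x - v μ y‖ ≤ L * ‖x - y‖) ∧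
  (∀ μ, MemM n μ → ∀ x, ‖v μ x‖ ≤ M) ∧
  (∀ μ ν, MemM n μ → MemM n ν → ∀ x, ‖v μ x - v ν x‖ ≤ K * Wp n p μ ν)

/-- Scheme 1 (semi-discrete in time Lagrangian scheme) with time step `Δt` on `[0,T]`:
`μ 0 = μ₀` and, on each interval `[iΔt, (i+1)Δt]`, `μ t` is the push-forward of
`μ (iΔt)` by the flow of the frozen vector field `v[μ (iΔt)]`. -/
def Scheme1 (n : ℕ) (v : Measure (En n) → En n → En n) (μ₀ : Measure (En n))
    (Δt T : ℝ) (μ : ℝ → Measure (En n)) : Prop :=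
  μ 0 = μ₀ ∧
  ∀ i : ℕ, ∀ t : ℝ, (i : ℝ) * Δt ≤ t → t ≤ ((i : ℝ) + 1) * Δt → t ≤ T →
    ∃ Φ : ℝ → En n → En n, IsFlow n (v (μ ((i : ℝ) * Δt))) Φ ∧
      μ t = Measure.map (Φ (t - (i : ℝ) * Δt)) (μ ((i : ℝ) * Δt))

/-- Weak (distributional) solution of `∂ₜ μₜ + ∇·(v[μₜ] μₜ) = 0` on `[0,T]`:
for every test function `f ∈ C_c^∞([0,T] × ℝⁿ)`,
`∫_0^T ∫ (∂ₜ f + v[μₜ]·∇f) dμₜ dt = 0`. -/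
def IsWeakSolution (n : ℕ) (v : Measure (En n) → En n → En n) (T : ℝ)
    (μ : ℝ → Measure (En n)) : Prop :=
  ∀ f : ℝ → En n → ℝ,
    ContDiff ℝ (⊤ : ℕ∞) (Function.uncurry f) →
    HasCompactSupport (Function.uncurry f) →
    (∫ t in Icc (0 : ℝ) T,
      ∫ x, (deriv (fun s => f s x) t + ⟪v (μ t) x, gradient (fun y => f t y) x⟫)
        ∂(μ t)) = 0

/-- Continuity in time with respect to the Wasserstein distance `W_p`, on `[0,T]`. -/
def WpContinuousOn (n : ℕ) (p T : ℝ) (μ : ℝ → Measure (En n)) : Prop :=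
  ∀ t ∈ Icc (0 : ℝ) T, ∀ ε > 0, ∃ δ > 0, ∀ s ∈ Icc (0 : ℝ) T, |s - t| < δ →
    Wp n p (μ s) (μ t) < ε

/-- The axis-parallel grid cell of side `Δx` indexed by `k : Fin n → ℤ`. -/
def gridCell (n : ℕ) (Δx : ℝ) (k : Fin n → ℤ) : Set (En n) :=
  {x | ∀ i, (k i : ℝ) * Δx ≤ x i ∧ x i < ((k i : ℝ) + 1) * Δx}

/-- The index of the grid cell of side `Δx` containing `x`. -/
def gridIdx (n : ℕ) (Δx : ℝ) (x : En n) : Fin n → ℤ := fun i => ⌊x i / Δx⌋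

/-- Grid discretization `G[μ]`: the measure which, on each cell `□` of the grid of
side `Δx`, has constant density `μ(□)/Δxⁿ` with respect to Lebesgue measure. -/
def gridDisc (n : ℕ) (Δx : ℝ) (μ : Measure (En n)) : Measure (En n) :=
  (volume : Measure (En n)).withDensity
    (fun x => μ (gridCell n Δx (gridIdx n Δx x)) / ENNReal.ofReal (Δx ^ n))

/-- `L¹` distance between two measures, via their densities (Radon–Nikodym
derivatives) with respect to Lebesgue measure. -/
def L1dist (n : ℕ) (μ ν : Measure (En n)) : ℝ :=
  ∫ x, |(μ.rnDeriv (volume : Measure (En n)) x).toReal -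
        (ν.rnDeriv (volume : Measure (En n)) x).toReal|

/-!
On a step of Scheme 1, `μ` and `ν` are pushed forward by the flows `Φ`, `Ψ` of the frozen fields
`v[μ]`, `v[ν]`, which are `L`-Lipschitz and differ by at most `K W_p(μ,ν)`. By Grönwall,
`‖Ψ_s z - Φ_s y‖ ≤ e^{Ls} ‖z - y‖ + K W_p(μ,ν) (e^{Ls} - 1) / L`, so conjugating a transport map
`γ` from `μ` to `ν` into `Ψ_s ∘ γ ∘ Φ_s⁻¹` and applying Minkowski's inequality in `Lᵖ(μ)` gives
`W_p(Φ_s#μ, Ψ_s#ν) ≤ (e^{LΔt} + K (e^{LΔt} - 1) / L) W_p(μ,ν)` for `0 ≤ s ≤ Δt`. This factor is at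
most the one in the statement, and iterating over the `2^k` steps gives the bound. Flows of
Lipschitz fields are bi-Lipschitz, so they keep the measures in `𝓜`, as the iteration requires.
-/

open scoped NNReal ENNReal

theorem LipschitzWith.addHaar_image_eq_zero {E : Type*} [NormedAddCommGroup E] [NormedSpace ℝ E]
    [FiniteDimensional ℝ E] [MeasurableSpace E] [BorelSpace E] (μ : Measure E)
    [μ.IsAddHaarMeasure] {f : E → E} {C : ℝ≥0} (hf : LipschitzWith C f) {s : Set E}
    (hs : μ s = 0) : μ (f '' s) = 0 := by
  have hμH : μ ≪ μH[Module.finrank ℝ E] := Measure.absolutelyContinuous_isAddHaarMeasure _ _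
  have hHμ : μH[Module.finrank ℝ E] ≪ μ := Measure.absolutelyContinuous_isAddHaarMeasure _ _
  refine hμH (le_antisymm ?_ zero_le)
  calc μH[Module.finrank ℝ E] (f '' s) ≤ C ^ (Module.finrank ℝ E : ℝ) * μH[Module.finrank ℝ E] s :=
        hf.hausdorffMeasure_image_le (Nat.cast_nonneg _) s
    _ = 0 := by rw [hHμ hs, mul_zero]

theorem rpow_integral_norm_rpow_eq_lpNorm {α E : Type*} [MeasurableSpace α]
    [NormedAddCommGroup E] {μ : Measure α} {f : α → E} (hf : AEStronglyMeasurable f μ)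
    {p : ℝ} (hp : 0 < p) :
    (∫ x, ‖f x‖ ^ p ∂μ) ^ (1 / p) = lpNorm f (ENNReal.ofReal p) μ := by
  rw [lpNorm_eq_integral_norm_rpow_toReal (by simpa using hp) ENNReal.ofReal_ne_top hf,
    ENNReal.toReal_ofReal hp.le, one_div]

theorem lpNorm_le_mul_lpNorm_add {α E F : Type*} [MeasurableSpace α] [NormedAddCommGroup E]
    [NormedAddCommGroup F] {μ : Measure α} [IsProbabilityMeasure μ] {p : ℝ≥0∞} (hp : 1 ≤ p)
    {f : α → E} {g : α → F} (hg : MemLp g p μ) {A B : ℝ} (hA : 0 ≤ A) (hB : 0 ≤ B)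
    (hfg : ∀ x, ‖f x‖ ≤ A * ‖g x‖ + B) : lpNorm f p μ ≤ A * lpNorm g p μ + B := by
  have hp0 : p ≠ 0 := (zero_lt_one.trans_le hp).ne'
  have hAg : MemLp (A • fun x => ‖g x‖) p μ := hg.norm.const_smul A
  calc lpNorm f p μ ≤ lpNorm ((A • fun x => ‖g x‖) + fun _ => B) p μ :=
        lpNorm_mono_real (hAg.add (memLp_const B)) hfg
    _ ≤ lpNorm (A • fun x => ‖g x‖) p μ + lpNorm (fun _ => B) p μ := lpNorm_add_le hAg hp
    _ = A * lpNorm g p μ + B := by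
        rw [lpNorm_const_smul, lpNorm_norm hg.aestronglyMeasurable,
          lpNorm_const hp0 (IsProbabilityMeasure.ne_zero μ)]
        simp [abs_of_nonneg hA, abs_of_nonneg hB]

variable {n : ℕ}

theorem MemM.map {μ : Measure (En n)} (hμ : MemM n μ) {f g : En n → En n} (hf : Continuous f)
    {C : ℝ≥0} (hg : LipschitzWith C g) (hgf : Function.LeftInverse g f) :
    MemM n (μ.map f) := by
  obtain ⟨hprob, hac, K, hK, hKc⟩ := hμ
  refine ⟨Measure.isProbabilityMeasure_map hf.aemeasurable, ?_, f '' K, hK.image hf, ?_⟩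
  · refine Measure.AbsolutelyContinuous.mk fun s hs hs0 => ?_
    rw [Measure.map_apply hf.measurable hs]
    have hsub : f ⁻¹' s ⊆ g '' s := fun x hx => ⟨f x, hx, hgf x⟩
    exact measure_mono_null hsub (hac (hg.addHaar_image_eq_zero volume hs0))
  · rw [Measure.map_apply hf.measurable (hK.image hf).isClosed.measurableSet.compl]
    exact measure_mono_null (fun x hx hxK => hx (mem_image_of_mem f hxK)) hKc

section Wasserstein

variable {p : ℝ} {μ ν : Measure (En n)}

theorem Wp_nonneg : 0 ≤ Wp n p μ ν := by
  refine Real.sInf_nonneg ?_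
  rintro _ ⟨γ, -, -, rfl⟩
  positivity

theorem Wp_le {γ : En n → En n} (hγ : Measurable γ) (hγμ : μ.map γ = ν) :
    Wp n p μ ν ≤ (∫ x, ‖γ x - x‖ ^ p ∂μ) ^ (1 / p) := by
  refine csInf_le ⟨0, ?_⟩ ⟨γ, hγ, hγμ, rfl⟩
  rintro _ ⟨γ, -, -, rfl⟩
  positivity

theorem le_Wp {γ₀ : En n → En n} (hγ₀ : Measurable γ₀) (hγ₀μ : μ.map γ₀ = ν) {a : ℝ}
    (ha : ∀ γ, Measurable γ → μ.map γ = ν → a ≤ (∫ x, ‖γ x - x‖ ^ p ∂μ) ^ (1 / p)) :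
    a ≤ Wp n p μ ν := by
  refine le_csInf ⟨_, γ₀, hγ₀, hγ₀μ, rfl⟩ ?_
  rintro _ ⟨γ, hγ, hγμ, rfl⟩
  exact ha γ hγ hγμ

/-- Junk value: with no transport map the infimum is `sInf ∅ = 0`. -/
theorem Wp_eq_zero_of_forall_map_ne (h : ∀ γ, Measurable γ → μ.map γ ≠ ν) :
    Wp n p μ ν = 0 := by
  rw [Wp, ← Real.sInf_empty]
  congr 1
  ext c
  simp only [mem_ofPred_eq, mem_empty_iff_false, iff_false]
  rintro ⟨γ, hγ, hγμ, -⟩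
  exact h γ hγ hγμ

/-- Displacements between compactly supported measures are bounded, so all of them are in `Lᵖ`;
without this the Bochner integral in `Wp` could silently vanish. -/
theorem memLp_sub_of_map_eq [IsFiniteMeasure μ] (hμ : ∃ K, IsCompact K ∧ μ Kᶜ = 0)
    (hν : ∃ K, IsCompact K ∧ ν Kᶜ = 0) {γ : En n → En n} (hγ : Measurable γ)
    (hγμ : μ.map γ = ν) (q : ℝ≥0∞) : MemLp (fun x => γ x - x) q μ := by
  obtain ⟨Kμ, hKμ, hμK⟩ := hμ
  obtain ⟨Kν, hKν, hνK⟩ := hν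
  obtain ⟨Rμ, hRμ⟩ := hKμ.isBounded.exists_norm_le
  obtain ⟨Rν, hRν⟩ := hKν.isBounded.exists_norm_le
  have hνK' : ∀ᵐ y ∂μ.map γ, y ∈ Kν := hγμ ▸ hνK
  have hγK : ∀ᵐ x ∂μ, γ x ∈ Kν := ae_of_ae_map hγ.aemeasurable hνK'
  have hxK : ∀ᵐ x ∂μ, x ∈ Kμ := hμK
  refine MemLp.of_bound (hγ.sub measurable_id).aestronglyMeasurable (Rν + Rμ) ?_
  filter_upwards [hγK, hxK] with x hγx hx
  exact (norm_sub_le _ _).trans (add_le_add (hRν _ hγx) (hRμ _ hx))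

end Wasserstein

section TransportEstimate

variable {p : ℝ} {μ ν : Measure (En n)} [IsProbabilityMeasure μ] {F G F' G' : En n → En n}
  {A B : ℝ}

/-- `G ∘ γ ∘ F'` transports `F#μ` to `G#ν`. -/
theorem Wp_map_le_of_map_eq (hp : 1 ≤ p) (hμ : ∃ K, IsCompact K ∧ μ Kᶜ = 0)
    (hν : ∃ K, IsCompact K ∧ ν Kᶜ = 0) (hF : Measurable F) (hG : Measurable G)
    (hF' : Measurable F') (hFF' : Function.LeftInverse F' F) (hA : 0 ≤ A) (hB : 0 ≤ B)
    (hFG : ∀ y z, ‖G z - F y‖ ≤ A * ‖z - y‖ + B) {γ : En n → En n} (hγ : Measurable γ)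
    (hγμ : μ.map γ = ν) :
    Wp n p (μ.map F) (ν.map G) ≤ A * (∫ x, ‖γ x - x‖ ^ p ∂μ) ^ (1 / p) + B := by
  have hp0 : 0 < p := zero_lt_one.trans_le hp
  set T : En n → En n := fun x => G (γ (F' x))
  have hT : Measurable T := hG.comp (hγ.comp hF')
  have hTF : T ∘ F = G ∘ γ := funext fun y => by simp [T, hFF' y]
  have hTμ : (μ.map F).map T = ν.map G := by
    rw [Measure.map_map hT hF, hTF, ← Measure.map_map hG hγ, hγμ]
  have hγ' : AEStronglyMeasurable (fun y => γ y - y) μ :=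
    (hγ.sub measurable_id).aestronglyMeasurable
  calc Wp n p (μ.map F) (ν.map G) ≤ (∫ x, ‖T x - x‖ ^ p ∂(μ.map F)) ^ (1 / p) := Wp_le hT hTμ
    _ = (∫ y, ‖G (γ y) - F y‖ ^ p ∂μ) ^ (1 / p) := by
        rw [integral_map (f := fun x => ‖T x - x‖ ^ p) hF.aemeasurable
          ((hT.sub measurable_id).norm.pow_const p).aestronglyMeasurable]
        simp only [T, hFF' _]
    _ = lpNorm (fun y => G (γ y) - F y) (ENNReal.ofReal p) μ :=
        rpow_integral_norm_rpow_eq_lpNorm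
          ((hG.comp hγ).sub hF).aestronglyMeasurable hp0
    _ ≤ A * lpNorm (fun y => γ y - y) (ENNReal.ofReal p) μ + B :=
        lpNorm_le_mul_lpNorm_add (ENNReal.one_le_ofReal.2 hp)
          (memLp_sub_of_map_eq hμ hν hγ hγμ _) hA hB fun y => hFG y (γ y)
    _ = A * (∫ x, ‖γ x - x‖ ^ p ∂μ) ^ (1 / p) + B := by
        rw [rpow_integral_norm_rpow_eq_lpNorm hγ' hp0]

theorem Wp_map_le_of_norm_sub_le (hp : 1 ≤ p) (hμ : ∃ K, IsCompact K ∧ μ Kᶜ = 0)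
    (hν : ∃ K, IsCompact K ∧ ν Kᶜ = 0) (hF : Measurable F) (hG : Measurable G)
    (hF' : Measurable F') (hG' : Measurable G') (hFF' : Function.LeftInverse F' F)
    (hGG' : Function.LeftInverse G' G) (hA : 0 < A) (hB : 0 ≤ B)
    (hFG : ∀ y z, ‖G z - F y‖ ≤ A * ‖z - y‖ + B) :
    Wp n p (μ.map F) (ν.map G) ≤ A * Wp n p μ ν + B := by
  by_cases htransport : ∃ γ, Measurable γ ∧ μ.map γ = ν
  · obtain ⟨γ₀, hγ₀, hγ₀μ⟩ := htransport
    have h : (Wp n p (μ.map F) (ν.map G) - B) / A ≤ Wp n p μ ν := by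
      refine le_Wp hγ₀ hγ₀μ fun γ hγ hγμ => ?_
      rw [div_le_iff₀' hA]
      linarith [Wp_map_le_of_map_eq hp hμ hν hF hG hF' hFF' hA.le hB hFG hγ hγμ]
    rw [div_le_iff₀' hA] at h
    linarith
  · push Not at htransport
    have hnone : ∀ T, Measurable T → (μ.map F).map T ≠ ν.map G := by
      intro T hT hTμ
      refine htransport (G' ∘ T ∘ F) (hG'.comp (hT.comp hF)) ?_
      rw [← Measure.map_map hG' (hT.comp hF), ← Measure.map_map hT hF, hTμ,
        Measure.map_map hG' hG, hGG'.comp_eq_id, Measure.map_id]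
    rw [Wp_eq_zero_of_forall_map_ne htransport, Wp_eq_zero_of_forall_map_ne hnone]
    linarith

end TransportEstimate

namespace IsFlow

variable {w : En n → En n} {Φ : ℝ → En n → En n} {C : ℝ≥0}

theorem apply_add (hΦ : IsFlow n w Φ) (hw : LipschitzWith C w) (a s : ℝ) (x : En n) :
    Φ (a + s) x = Φ a (Φ s x) := by
  have hshift : ∀ t, HasDerivAt (fun u => Φ (u + s) x) (w (Φ (t + s) x)) t := fun t =>
    (hΦ.2 x (t + s)).comp_add_const t s
  have h := ODE_solution_unique_univ (v := fun _ => w) (s := fun _ => univ) (t₀ := 0)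
    (fun _ => hw.lipschitzOnWith) (fun t => ⟨hshift t, trivial⟩)
    (fun t => ⟨hΦ.2 (Φ s x) t, trivial⟩) (by simp [hΦ.1])
  exact congrFun h a

theorem apply_neg_apply (hΦ : IsFlow n w Φ) (hw : LipschitzWith C w) (s : ℝ) (x : En n) :
    Φ (-s) (Φ s x) = x := by
  rw [← hΦ.apply_add hw, neg_add_cancel, hΦ.1]

theorem neg (hΦ : IsFlow n w Φ) : IsFlow n (-w) (fun t => Φ (-t)) :=
  ⟨by simpa using hΦ.1, fun x t => by
    simpa [Function.comp_def] using (hΦ.2 x (-t)).scomp t (hasDerivAt_neg t)⟩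

theorem dist_le_gronwallBound {w' : En n → En n} {Ψ : ℝ → En n → En n} (hΦ : IsFlow n w Φ)
    (hΨ : IsFlow n w' Ψ) (hw : LipschitzWith C w) {ε : ℝ} (hww' : ∀ z, ‖w z - w' z‖ ≤ ε)
    {s : ℝ} (hs : 0 ≤ s) (x y : En n) :
    dist (Φ s x) (Ψ s y) ≤ gronwallBound (dist x y) C ε s := by
  have := dist_le_of_approx_trajectories_ODE (v := fun _ => w) (εf := 0) (εg := ε)
    (fun _ => hw)
    (fun u _ => (hΦ.2 x u).continuousAt.continuousWithinAt)
    (fun u _ => (hΦ.2 x u).hasDerivWithinAt) (fun u _ => by simp)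
    (fun u _ => (hΨ.2 y u).continuousAt.continuousWithinAt)
    (fun u _ => (hΨ.2 y u).hasDerivWithinAt)
    (fun u _ => by rw [dist_eq_norm, norm_sub_rev]; exact hww' _)
    (by simp only [hΦ.1, hΨ.1]; exact le_rfl) s ⟨hs, le_rfl⟩
  simpa using this

theorem lipschitzWith_of_nonneg (hΦ : IsFlow n w Φ) (hw : LipschitzWith C w) {t : ℝ}
    (ht : 0 ≤ t) : LipschitzWith (Real.exp (C * t)).toNNReal (Φ t) :=
  LipschitzWith.of_dist_le_mul fun x y => by
    have := hΦ.dist_le_gronwallBound hΦ hw (ε := 0) (by simp) ht x y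
    rwa [gronwallBound_ε0, mul_comm, ← Real.coe_toNNReal _ (Real.exp_nonneg _)] at this

theorem exists_lipschitzWith (hΦ : IsFlow n w Φ) (hw : LipschitzWith C w) (t : ℝ) :
    ∃ C', LipschitzWith C' (Φ t) := by
  rcases le_total 0 t with ht | ht
  · exact ⟨_, hΦ.lipschitzWith_of_nonneg hw ht⟩
  · have := hΦ.neg.lipschitzWith_of_nonneg hw.neg (neg_nonneg.2 ht)
    exact ⟨_, by simpa using this⟩

theorem measurable (hΦ : IsFlow n w Φ) (hw : LipschitzWith C w) (t : ℝ) : Measurable (Φ t) :=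
  (hΦ.exists_lipschitzWith hw t).choose_spec.continuous.measurable

theorem memM_map (hΦ : IsFlow n w Φ) (hw : LipschitzWith C w) {μ : Measure (En n)}
    (hμ : MemM n μ) (t : ℝ) : MemM n (μ.map (Φ t)) :=
  hμ.map (hΦ.exists_lipschitzWith hw t).choose_spec.continuous
    (hΦ.exists_lipschitzWith hw (-t)).choose_spec (hΦ.apply_neg_apply hw t)

theorem Wp_map_le {w' : En n → En n} {Ψ : ℝ → En n → En n} {C' : ℝ≥0} {p : ℝ} (hp : 1 ≤ p)
    {μ ν : Measure (En n)} [IsProbabilityMeasure μ] (hμ : ∃ K, IsCompact K ∧ μ Kᶜ = 0)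
    (hν : ∃ K, IsCompact K ∧ ν Kᶜ = 0) (hΦ : IsFlow n w Φ) (hΨ : IsFlow n w' Ψ)
    (hw : LipschitzWith C w) (hw' : LipschitzWith C' w') (hC : C ≠ 0) {ε : ℝ}
    (hww' : ∀ z, ‖w z - w' z‖ ≤ ε) {s : ℝ} (hs : 0 ≤ s) :
    Wp n p (μ.map (Φ s)) (ν.map (Ψ s)) ≤
      Real.exp (C * s) * Wp n p μ ν + ε / C * (Real.exp (C * s) - 1) := by
  have hε : 0 ≤ ε := (norm_nonneg _).trans (hww' 0)
  refine Wp_map_le_of_norm_sub_le hp hμ hν (hΦ.measurable hw s) (hΨ.measurable hw' s)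
    (hΦ.measurable hw (-s)) (hΨ.measurable hw' (-s)) (hΦ.apply_neg_apply hw s)
    (hΨ.apply_neg_apply hw' s) (Real.exp_pos _) ?_ fun y z => ?_
  · have : 0 ≤ Real.exp (C * s) - 1 := by
      rw [sub_nonneg]; exact Real.one_le_exp (by positivity)
    positivity
  · have := hΦ.dist_le_gronwallBound hΨ hw hww' hs y z
    rw [gronwallBound_of_K_ne_0 (NNReal.coe_ne_zero.2 hC), dist_eq_norm, dist_eq_norm,
      norm_sub_rev y] at this
    rw [norm_sub_rev]
    linarith

end IsFlow

def scheme1StepFactor (L K Δt : ℝ) : ℝ :=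
  Real.exp (L * Δt) + K * (Real.exp (L * Δt) - 1) / L

section StepFactor

variable {L K : ℝ}

theorem one_le_scheme1StepFactor (hL : 0 < L) (hK : 0 ≤ K) {Δt : ℝ} (hΔt : 0 ≤ Δt) :
    1 ≤ scheme1StepFactor L K Δt := by
  have h : 1 ≤ Real.exp (L * Δt) := Real.one_le_exp (by positivity)
  have : 0 ≤ K * (Real.exp (L * Δt) - 1) / L := by
    have : 0 ≤ Real.exp (L * Δt) - 1 := by linarith
    positivity
  unfold scheme1StepFactor
  linarith

theorem scheme1StepFactor_mono (hL : 0 < L) (hK : 0 ≤ K) : Monotone (scheme1StepFactor L K) :=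
  fun s t hst => by unfold scheme1StepFactor; gcongr

theorem scheme1StepFactor_le {p : ℝ} (hp : 0 < p) (hL : 0 < L) (hK : 0 ≤ K) {Δt : ℝ}
    (hΔt : 0 ≤ Δt) :
    scheme1StepFactor L K Δt ≤
      Real.exp ((p + 1) / p * L * Δt) +
        Real.exp (L * Δt / p) * (Real.exp (L * Δt) - 1) * K / L := by
  have hexp : 0 ≤ Real.exp (L * Δt) - 1 := sub_nonneg.2 (Real.one_le_exp (by positivity))
  have h₁ : Real.exp (L * Δt) ≤ Real.exp ((p + 1) / p * L * Δt) := by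
    have : 1 ≤ (p + 1) / p := by rw [le_div_iff₀ hp]; linarith
    gcongr
    exact le_mul_of_one_le_left hL.le this
  have h₂ : K * (Real.exp (L * Δt) - 1) ≤
      Real.exp (L * Δt / p) * (Real.exp (L * Δt) - 1) * K := by
    have : 1 ≤ Real.exp (L * Δt / p) := Real.one_le_exp (by positivity)
    nlinarith [mul_nonneg hK hexp]
  unfold scheme1StepFactor
  gcongr

end StepFactor

section Scheme

variable {p L M K Δt T : ℝ} {v : Measure (En n) → En n → En n}
  {μ₀ ν₀ : Measure (En n)} {μ ν : ℝ → Measure (En n)}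

theorem HypH.lipschitzWith (hH : HypH n p v L M K) {μ : Measure (En n)} (hμ : MemM n μ) :
    LipschitzWith ⟨L, hH.1.le⟩ (v μ) :=
  LipschitzWith.of_dist_le_mul fun x y => by
    rw [dist_eq_norm, dist_eq_norm]
    exact hH.2.2.2.2.1 μ hμ x y

theorem Scheme1.memM_of_mem_Icc (hH : HypH n p v L M K) (hμ : Scheme1 n v μ₀ Δt T μ) {i : ℕ}
    (hμi : MemM n (μ (i * Δt))) {t : ℝ} (ht : t ∈ Icc (i * Δt) ((i + 1) * Δt)) (htT : t ≤ T) :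
    MemM n (μ t) := by
  obtain ⟨Φ, hΦ, hμt⟩ := hμ.2 i t ht.1 ht.2 htT
  rw [hμt]
  exact hΦ.memM_map (hH.lipschitzWith hμi) hμi _

theorem Scheme1.Wp_le_of_mem_Icc (hp : 1 ≤ p) (hH : HypH n p v L M K)
    (hμ : Scheme1 n v μ₀ Δt T μ) (hν : Scheme1 n v ν₀ Δt T ν) {i : ℕ}
    (hμi : MemM n (μ (i * Δt))) (hνi : MemM n (ν (i * Δt))) {t : ℝ}
    (ht : t ∈ Icc (i * Δt) ((i + 1) * Δt)) (htT : t ≤ T) :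
    Wp n p (μ t) (ν t) ≤ scheme1StepFactor L K Δt * Wp n p (μ (i * Δt)) (ν (i * Δt)) := by
  obtain ⟨hL, -, hK, -, -, -, hvK⟩ := id hH
  obtain ⟨Φ, hΦ, hμt⟩ := hμ.2 i t ht.1 ht.2 htT
  obtain ⟨Ψ, hΨ, hνt⟩ := hν.2 i t ht.1 ht.2 htT
  have := hμi.1
  have hs : 0 ≤ t - i * Δt := sub_nonneg.2 ht.1
  have hsΔt : t - i * Δt ≤ Δt := by linarith [ht.2]
  have hW := Wp_nonneg (n := n) (p := p) (μ := μ (i * Δt)) (ν := ν (i * Δt))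
  calc Wp n p (μ t) (ν t)
      ≤ Real.exp (L * (t - i * Δt)) * Wp n p (μ (i * Δt)) (ν (i * Δt)) +
          K * Wp n p (μ (i * Δt)) (ν (i * Δt)) / L * (Real.exp (L * (t - i * Δt)) - 1) := by
        rw [hμt, hνt]
        exact hΦ.Wp_map_le hp hμi.2.2 hνi.2.2 hΨ (hH.lipschitzWith hμi) (hH.lipschitzWith hνi)
          (show (0 : ℝ≥0) < ⟨L, hL.le⟩ from hL).ne' (hvK _ _ hμi hνi) hs
    _ = scheme1StepFactor L K (t - i * Δt) * Wp n p (μ (i * Δt)) (ν (i * Δt)) := by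
        unfold scheme1StepFactor; ring
    _ ≤ scheme1StepFactor L K Δt * Wp n p (μ (i * Δt)) (ν (i * Δt)) := by
        gcongr
        exact scheme1StepFactor_mono hL hK.le hsΔt

theorem Scheme1.memM_and_Wp_le_pow (hp : 1 ≤ p) (hH : HypH n p v L M K) (hΔt : 0 < Δt)
    (hμ : Scheme1 n v μ₀ Δt T μ) (hν : Scheme1 n v ν₀ Δt T ν) (hμ₀ : MemM n μ₀)
    (hν₀ : MemM n ν₀) (i : ℕ) {t : ℝ} (ht₀ : 0 ≤ t) (hti : t ≤ i * Δt) (htT : t ≤ T) :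
    MemM n (μ t) ∧ MemM n (ν t) ∧
      Wp n p (μ t) (ν t) ≤ scheme1StepFactor L K Δt ^ i * Wp n p μ₀ ν₀ := by
  have hc := one_le_scheme1StepFactor hH.1 hH.2.2.1.le hΔt.le
  have hW₀ := Wp_nonneg (n := n) (p := p) (μ := μ₀) (ν := ν₀)
  induction i generalizing t with
  | zero =>
    obtain rfl : t = 0 := le_antisymm (by simpa using hti) ht₀
    rw [hμ.1, hν.1]
    exact ⟨hμ₀, hν₀, by simp⟩
  | succ i ih =>
    rcases le_or_gt t (i * Δt) with hti' | hti'
    · obtain ⟨hμt, hνt, hWt⟩ := ih ht₀ hti' htT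
      exact ⟨hμt, hνt, hWt.trans
        (mul_le_mul_of_nonneg_right (pow_le_pow_right₀ hc i.le_succ) hW₀)⟩
    · have hit : t ∈ Icc (i * Δt) ((i + 1) * Δt) := ⟨hti'.le, by simpa using hti⟩
      obtain ⟨hμi, hνi, hWi⟩ := ih (by positivity) le_rfl (hti'.le.trans htT)
      refine ⟨hμ.memM_of_mem_Icc hH hμi hit htT, hν.memM_of_mem_Icc hH hνi hit htT, ?_⟩
      calc Wp n p (μ t) (ν t)
          ≤ scheme1StepFactor L K Δt * Wp n p (μ (i * Δt)) (ν (i * Δt)) :=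
            hμ.Wp_le_of_mem_Icc hp hH hν hμi hνi hit htT
        _ ≤ scheme1StepFactor L K Δt * (scheme1StepFactor L K Δt ^ i * Wp n p μ₀ ν₀) := by
            gcongr
        _ = scheme1StepFactor L K Δt ^ (i + 1) * Wp n p μ₀ ν₀ := by ring

end Scheme

/-- Continuous dependence on the initial data for Scheme 1:
`d(μᵏ,νᵏ) ≤ (e^{((p+1)/p)LΔt} + e^{LΔt/p}(e^{LΔt}-1)K/L)^{2ᵏ} W_p(μ₀,ν₀)`. -/
theorem stmt10 (n : ℕ) (p T : ℝ) (hp : 1 ≤ p) (hT : 0 < T)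
    (v : Measure (En n) → En n → En n) (L M K : ℝ) (hH : HypH n p v L M K)
    (μ₀ ν₀ : Measure (En n)) (hμ₀ : MemM n μ₀) (hν₀ : MemM n ν₀)
    (k : ℕ) (μ ν : ℝ → Measure (En n))
    (hμ : Scheme1 n v μ₀ (T / 2 ^ k) T μ)
    (hν : Scheme1 n v ν₀ (T / 2 ^ k) T ν) :
    ∀ t ∈ Icc (0 : ℝ) T,
      Wp n p (μ t) (ν t) ≤
        (Real.exp ((p + 1) / p * L * (T / 2 ^ k)) +
            Real.exp (L * (T / 2 ^ k) / p) * (Real.exp (L * (T / 2 ^ k)) - 1) * K / L)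
          ^ (2 ^ k) * Wp n p μ₀ ν₀ := by
  intro t ht
  have hΔt : 0 < T / 2 ^ k := by positivity
  have htT : t ≤ ((2 ^ k : ℕ) : ℝ) * (T / 2 ^ k) := by
    rw [Nat.cast_pow, Nat.cast_ofNat, mul_div_cancel₀ _ (by positivity)]
    exact ht.2
  obtain ⟨-, -, hW⟩ := hμ.memM_and_Wp_le_pow hp hH hΔt hν hμ₀ hν₀ (2 ^ k) ht.1 htT ht.2
  have hc := one_le_scheme1StepFactor hH.1 hH.2.2.1.le hΔt.le
  refine hW.trans (mul_le_mul_of_nonneg_right ?_ Wp_nonneg)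
  exact pow_le_pow_left₀ (zero_le_one.trans hc)
    (scheme1StepFactor_le (zero_lt_one.trans_le hp) hH.1 hH.2.2.1.le hΔt.le) _
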